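/- arXiv:1702.00595 — 3 statements merged into one kernel-verified Lean document; each statement's English description precedes it below -/
import Mathlib

section
/- For every α ∈ (1,2) and every real u ≠ 0, the limit as ε ↓ 0 of ∫_ℝ |x|^{α-1} e^{-ε|x|} e^{-iux} dx equals 2Γ(α)|u|^{-α} cos(πα/2). -/
/-!
Split the integral at `0`. On each half-line it is a Laplace transform
`∫₀^∞ t^(α-1) e^(-z t) dt = Γ(α) (1/z)^α` with `z = ε ± i u`; this is the Gamma integral for
real `z > 0` and extends to `Re z > 0` by analytic continuation in `z`. As `ε → 0` the two
terms tend to `(1/(iu))^α` and its complex conjugate; since `1/(iu)` has argument `±π/2`, their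
sum is `2 |u|^(-α) cos(πα/2)`.
-/

open Complex Real Filter MeasureTheory Set Topology

open scoped ComplexConjugate

lemma integrableOn_rpow_mul_exp_neg_mul_Ioi {s b : ℝ} (hs : -1 < s) (hb : 0 < b) :
    IntegrableOn (fun t : ℝ => t ^ s * Real.exp (-(b * t))) (Ioi 0) := by
  simpa [Real.rpow_one] using integrableOn_rpow_mul_exp_neg_mul_rpow hs zero_lt_one hb

lemma continuousOn_ofReal_cpow_mul_cexp_neg_mul (a z : ℂ) :
    ContinuousOn (fun t : ℝ => (t : ℂ) ^ (a - 1) * cexp (-(z * t))) (Ioi 0) := fun t ht =>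
  ((continuousAt_ofReal_cpow_const t _ (Or.inr (ne_of_gt ht))).mul
    (by fun_prop : Continuous fun t : ℝ => cexp (-(z * t))).continuousAt).continuousWithinAt

section Laplace

variable {a : ℂ}

lemma norm_ofReal_cpow_mul_cexp_neg_mul {t : ℝ} (ht : 0 < t) (z : ℂ) :
    ‖(t : ℂ) ^ (a - 1) * cexp (-(z * t))‖ = t ^ (a.re - 1) * Real.exp (-(z.re * t)) := by
  simp [norm_cpow_eq_rpow_re_of_pos ht, Complex.norm_exp]

lemma integrableOn_ofReal_cpow_mul_cexp_neg_mul_Ioi (ha : 0 < a.re) {z : ℂ} (hz : 0 < z.re) :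
    IntegrableOn (fun t : ℝ => (t : ℂ) ^ (a - 1) * cexp (-(z * t))) (Ioi 0) := by
  refine (integrableOn_rpow_mul_exp_neg_mul_Ioi (s := a.re - 1) (by linarith) hz).mono'
    ((continuousOn_ofReal_cpow_mul_cexp_neg_mul a z).aestronglyMeasurable measurableSet_Ioi) ?_
  filter_upwards [ae_restrict_mem measurableSet_Ioi] with t ht
  exact (norm_ofReal_cpow_mul_cexp_neg_mul ht z).le

lemma differentiableOn_integral_ofReal_cpow_mul_cexp_neg_mul_Ioi (ha : 0 < a.re) :
    DifferentiableOn ℂ (fun z : ℂ => ∫ t in Ioi (0 : ℝ), (t : ℂ) ^ (a - 1) * cexp (-(z * t)))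
      {z | 0 < z.re} := by
  intro z₀ (hz₀ : 0 < z₀.re)
  set δ := z₀.re / 2 with hδ_def
  have hδ : 0 < δ := half_pos hz₀
  have hre : ∀ w ∈ Metric.ball z₀ δ, δ ≤ w.re := fun w hw => by
    have := (abs_re_le_norm (w - z₀)).trans (mem_ball_iff_norm.mp hw).le
    rw [sub_re] at this
    linarith [(abs_le.mp this).1, hδ_def]
  refine (hasDerivAt_integral_of_dominated_loc_of_deriv_le (μ := volume.restrict (Ioi 0))
    (F' := fun w t => -((t : ℂ) * ((t : ℂ) ^ (a - 1) * cexp (-(w * t)))))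
    (bound := fun t => t * (t ^ (a.re - 1) * Real.exp (-(δ * t))))
    (Metric.ball_mem_nhds z₀ hδ)
    (Eventually.of_forall fun w =>
      (continuousOn_ofReal_cpow_mul_cexp_neg_mul a w).aestronglyMeasurable measurableSet_Ioi)
    (integrableOn_ofReal_cpow_mul_cexp_neg_mul_Ioi ha hz₀) ?_ ?_ ?_ ?_).2
    |>.differentiableAt.differentiableWithinAt
  · exact ((continuous_ofReal.continuousOn.mul
      (continuousOn_ofReal_cpow_mul_cexp_neg_mul a z₀)).neg).aestronglyMeasurable measurableSet_Ioi
  · filter_upwards [ae_restrict_mem measurableSet_Ioi] with t (ht : 0 < t) w hw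
    rw [norm_neg, norm_mul, norm_real, Real.norm_of_nonneg ht.le,
      norm_ofReal_cpow_mul_cexp_neg_mul ht]
    gcongr
    nlinarith [hre w hw]
  · have := integrableOn_rpow_mul_exp_neg_mul_Ioi (s := a.re) (by linarith) hδ
    refine this.congr_fun (fun t (ht : 0 < t) => ?_) measurableSet_Ioi
    rw [← mul_assoc, Real.rpow_sub_one ht.ne', mul_div_cancel₀ _ ht.ne']
  · filter_upwards with t w _
    exact ((((hasDerivAt_id w).mul_const (t : ℂ)).neg.cexp).const_mul _).congr_deriv
      (by simp only [id, Pi.neg_apply, one_mul]; ring)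

theorem integral_cpow_mul_exp_neg_mul_Ioi_of_re_pos {z : ℂ} (ha : 0 < a.re) (hz : 0 < z.re) :
    ∫ t in Ioi (0 : ℝ), (t : ℂ) ^ (a - 1) * cexp (-(z * t)) = (1 / z) ^ a * Gamma a := by
  set U : Set ℂ := {z | 0 < z.re}
  have hU : IsOpen U := isOpen_lt continuous_const continuous_re
  have hg : DifferentiableOn ℂ (fun z : ℂ => (1 / z) ^ a * Gamma a) U := fun w (hw : 0 < w.re) =>
    have hw₀ : w ≠ 0 := fun h => by simp [h] at hw
    have : 0 < (1 / w).re := by rw [one_div, inv_re]; exact div_pos hw (normSq_pos.mpr hw₀)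
    (((differentiableAt_const 1).div differentiableAt_id hw₀).cpow_const
      (Or.inl this)).mul_const _ |>.differentiableWithinAt
  have hreal : ∃ᶠ w in 𝓝[≠] (1 : ℂ), (∫ t in Ioi (0 : ℝ), (t : ℂ) ^ (a - 1) * cexp (-(w * t)))
      = (1 / w) ^ a * Gamma a := by
    have hmap : Tendsto (fun r : ℝ => (r : ℂ)) (𝓝[>] 1) (𝓝[≠] 1) := by
      refine tendsto_nhdsWithin_of_tendsto_nhds_of_eventually_within _ ?_ ?_
      · simpa using continuous_ofReal.tendsto (1 : ℝ) |>.mono_left nhdsWithin_le_nhds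
      · filter_upwards [self_mem_nhdsWithin] with r (hr : 1 < r)
        simpa using hr.ne'
    refine hmap.frequently (Eventually.frequently ?_)
    filter_upwards [self_mem_nhdsWithin] with r (hr : 1 < r)
    exact Complex.integral_cpow_mul_exp_neg_mul_Ioi ha (by linarith)
  exact ((differentiableOn_integral_ofReal_cpow_mul_cexp_neg_mul_Ioi ha).analyticOnNhd hU
    |>.eqOn_of_preconnected_of_frequently_eq (hg.analyticOnNhd hU)
      (convex_halfSpace_re_gt 0).isPreconnected (by simp) hreal) hz

end Laplace

lemma integral_eq_setIntegral_Ioi_add_setIntegral_Ioi_comp_neg {E : Type*} [NormedAddCommGroup E]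
    [NormedSpace ℝ E] {f : ℝ → E} (hpos : IntegrableOn f (Ioi 0))
    (hneg : IntegrableOn (fun x => f (-x)) (Ioi 0)) :
    ∫ x, f x = (∫ x in Ioi 0, f x) + ∫ x in Ioi 0, f (-x) := by
  have hIic : IntegrableOn f (Iic 0) := by
    have hneg_emb : MeasurableEmbedding fun x : ℝ => -x := (Homeomorph.neg ℝ).measurableEmbedding
    rw [← Measure.map_neg_eq_self (volume : Measure ℝ), hneg_emb.integrableOn_map_iff]
    simpa [Function.comp_def] using (integrableOn_Ici_iff_integrableOn_Ioi).mpr hneg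
  rw [← intervalIntegral.integral_Iic_add_Ioi hIic hpos, add_comm]
  simp

lemma cpow_ofReal_add_conj_cpow_ofReal_of_re_eq_zero {w : ℂ} (hw₀ : w ≠ 0) (hw : w.re = 0)
    (s : ℝ) : w ^ (s : ℂ) + conj w ^ (s : ℂ) = ((2 * ‖w‖ ^ s * Real.cos (π * s / 2) : ℝ) : ℂ) := by
  have harg : |arg w| = π / 2 :=
    le_antisymm (abs_arg_le_pi_div_two_iff.mpr hw.ge)
      (not_lt.mp fun h => by simp [abs_arg_lt_pi_div_two_iff, hw, hw₀] at h)
  have hcos : Real.cos (arg w * s) = Real.cos (π * s / 2) := by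
    rcases abs_eq (by positivity) |>.mp harg with h | h <;> rw [h]
    · ring_nf
    · rw [← Real.cos_neg]; ring_nf
  rw [conj_cpow _ _ (by rw [Ne, arg_eq_pi_iff, hw]; simp), conj_ofReal, Complex.add_conj,
    cpow_ofReal_re, hcos, mul_assoc]

lemma abs_rpow_mul_exp_mul_cexp_of_pos (α ε u : ℝ) {x : ℝ} (hx : 0 < x) :
    ((|x| ^ (α - 1) * Real.exp (-(ε * |x|)) : ℝ) : ℂ) * cexp (-(I * u * x))
      = (x : ℂ) ^ ((α : ℂ) - 1) * cexp (-((ε + I * u) * x)) := by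
  rw [abs_of_pos hx, ofReal_mul, ofReal_cpow hx.le, ofReal_exp, mul_assoc, ← Complex.exp_add]
  push_cast
  ring_nf

section DampedFourier

variable {α ε : ℝ}

lemma integrableOn_abs_rpow_mul_exp_mul_cexp_Ioi (hα : 0 < α) (hε : 0 < ε) (u : ℝ) :
    IntegrableOn (fun x : ℝ => ((|x| ^ (α - 1) * Real.exp (-(ε * |x|)) : ℝ) : ℂ)
      * cexp (-(I * u * x))) (Ioi 0) :=
  (integrableOn_ofReal_cpow_mul_cexp_neg_mul_Ioi (by simpa using hα : 0 < (α : ℂ).re)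
    (by simpa using hε : 0 < ((ε : ℂ) + I * u).re)).congr_fun
    (fun _ hx => (abs_rpow_mul_exp_mul_cexp_of_pos α ε u hx).symm) measurableSet_Ioi

lemma setIntegral_abs_rpow_mul_exp_mul_cexp_Ioi (hα : 0 < α) (hε : 0 < ε) (u : ℝ) :
    ∫ x in Ioi 0, ((|x| ^ (α - 1) * Real.exp (-(ε * |x|)) : ℝ) : ℂ) * cexp (-(I * u * x))
      = (1 / (ε + I * u)) ^ (α : ℂ) * Complex.Gamma α := by
  rw [setIntegral_congr_fun measurableSet_Ioi
    (fun _ hx => abs_rpow_mul_exp_mul_cexp_of_pos α ε u hx)]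
  exact integral_cpow_mul_exp_neg_mul_Ioi_of_re_pos (by simpa using hα) (by simpa using hε)

lemma integral_abs_rpow_mul_exp_mul_cexp (hα : 0 < α) (hε : 0 < ε) (u : ℝ) :
    ∫ x, ((|x| ^ (α - 1) * Real.exp (-(ε * |x|)) : ℝ) : ℂ) * cexp (-(I * u * x))
      = Complex.Gamma α * ((1 / (ε + I * u)) ^ (α : ℂ) + conj (1 / (ε + I * u)) ^ (α : ℂ)) := by
  have hrefl : ∀ x : ℝ, ((|-x| ^ (α - 1) * Real.exp (-(ε * |-x|)) : ℝ) : ℂ)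
      * cexp (-(I * u * ↑(-x))) = ((|x| ^ (α - 1) * Real.exp (-(ε * |x|)) : ℝ) : ℂ)
      * cexp (-(I * ↑(-u) * x)) := fun x => by
    rw [abs_neg]; push_cast; ring_nf
  have hconj : conj (1 / ((ε : ℂ) + I * u)) = 1 / (ε + I * ↑(-u)) := by
    simp [conj_ofReal, conj_I]
  rw [integral_eq_setIntegral_Ioi_add_setIntegral_Ioi_comp_neg
      (integrableOn_abs_rpow_mul_exp_mul_cexp_Ioi hα hε u)
      (by simpa only [hrefl] using integrableOn_abs_rpow_mul_exp_mul_cexp_Ioi hα hε (-u)),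
    funext hrefl, setIntegral_abs_rpow_mul_exp_mul_cexp_Ioi hα hε,
    setIntegral_abs_rpow_mul_exp_mul_cexp_Ioi hα hε, hconj]
  ring

end DampedFourier

theorem stmt4_general (α : ℝ) (hα1 : 1 < α) (u : ℝ) (hu : u ≠ 0) :
    Filter.Tendsto
      (fun ε : ℝ => ∫ x : ℝ, ((|x| ^ (α - 1) * Real.exp (-(ε * |x|)) : ℝ) : ℂ)
        * Complex.exp (-(Complex.I * u * x)))
      (nhdsWithin 0 (Set.Ioi 0))
      (nhds ((2 * Real.Gamma α * |u| ^ (-α) * Real.cos (Real.pi * α / 2) : ℝ) : ℂ)) := by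
  set F : ℂ → ℂ := fun w => Complex.Gamma α * (w ^ (α : ℂ) + conj w ^ (α : ℂ))
  set w₀ : ℂ := 1 / (I * u)
  have hw₀ : w₀ ≠ 0 := by simp [w₀, hu]
  have hw₀_re : w₀.re = 0 := by simp [w₀]
  have hF : ContinuousAt F w₀ := by
    have hslit : ∀ w : ℂ, w ≠ 0 → w.re = 0 → w ∈ slitPlane := fun w hw h =>
      mem_slitPlane_iff.mpr (Or.inr fun him => hw (Complex.ext h him))
    exact continuousAt_const.mul ((continuousAt_cpow_const (hslit w₀ hw₀ hw₀_re)).add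
      ((continuousAt_cpow_const (hslit _ (by simpa using hw₀) (by simpa using hw₀_re))).comp
        continuous_conj.continuousAt))
  have hζ : Tendsto (fun ε : ℝ => 1 / ((ε : ℂ) + I * u)) (𝓝 0) (𝓝 w₀) := by
    have : ContinuousAt (fun ε : ℝ => 1 / ((ε : ℂ) + I * u)) 0 := by fun_prop (disch := simp [hu])
    simpa [w₀] using this.tendsto
  have hvalue : F w₀ = ((2 * Real.Gamma α * |u| ^ (-α) * Real.cos (π * α / 2) : ℝ) : ℂ) := by
    simp only [F, cpow_ofReal_add_conj_cpow_ofReal_of_re_eq_zero hw₀ hw₀_re, Gamma_ofReal, w₀]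
    simp [Real.rpow_neg (abs_nonneg u), Real.inv_rpow (abs_nonneg u)]
    ring
  rw [← hvalue]
  refine ((hF.tendsto.comp hζ).mono_left nhdsWithin_le_nhds).congr' ?_
  filter_upwards [self_mem_nhdsWithin] with ε (hε : 0 < ε)
  exact (integral_abs_rpow_mul_exp_mul_cexp (by linarith) hε u).symm

theorem stmt4 (α : ℝ) (hα1 : 1 < α) (hα2 : α < 2) (u : ℝ) (hu : u ≠ 0) :
    Filter.Tendsto
      (fun ε : ℝ => ∫ x : ℝ, ((|x| ^ (α - 1) * Real.exp (-(ε * |x|)) : ℝ) : ℂ)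
        * Complex.exp (-(Complex.I * u * x)))
      (nhdsWithin 0 (Set.Ioi 0))
      (nhds ((2 * Real.Gamma α * |u| ^ (-α) * Real.cos (Real.pi * α / 2) : ℝ) : ℂ)) :=
  stmt4_general α hα1 u hu
end

section
/- For every α ∈ (1,2), every ε with 0 ≤ ε ≤ 2−α, and every real x, one has ||x+1|^{α-1} − 1| ≤ min(|x|^{(α+ε)/2}, |x|^{α-1}). -/
/-!
With `t = |x + 1|` and `p = α - 1 ∈ (0, 1]`, the map `t ↦ t ^ p` is `p`-Hölder with constant 1
(subadditivity of concave powers) and moves `t` no farther from 1 than `t` itself is, while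
`|t - 1| ≤ |x|`. So the left side is at most `min (|x| ^ p) |x|`, which is dominated by
`|x| ^ q` for any exponent `q ∈ [p, 1]`, in particular `q = (α + ε) / 2`.
-/

open Real

lemma abs_rpow_sub_rpow_le_abs_sub_rpow {a b p : ℝ} (ha : 0 ≤ a) (hb : 0 ≤ b) (hp0 : 0 ≤ p)
    (hp1 : p ≤ 1) : |a ^ p - b ^ p| ≤ |a - b| ^ p := by
  wlog hba : b ≤ a generalizing a b
  · rw [abs_sub_comm, abs_sub_comm a]
    exact this hb ha (le_of_not_ge hba)
  have hmono : b ^ p ≤ a ^ p := rpow_le_rpow hb hba hp0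
  have hsubadd : a ^ p ≤ (a - b) ^ p + b ^ p := by
    simpa using rpow_add_le_add_rpow (sub_nonneg.2 hba) hb hp0 hp1
  rw [abs_of_nonneg (sub_nonneg.2 hmono), abs_of_nonneg (sub_nonneg.2 hba)]
  linarith

lemma abs_rpow_sub_one_le_abs_sub_one {t p : ℝ} (ht : 0 ≤ t) (hp0 : 0 ≤ p) (hp1 : p ≤ 1) :
    |t ^ p - 1| ≤ |t - 1| := by
  rcases le_total 1 t with h1 | h1
  · have hlow : 1 ≤ t ^ p := one_le_rpow h1 hp0
    have hup : t ^ p ≤ t := rpow_le_self_of_one_le h1 hp1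
    rw [abs_of_nonneg (sub_nonneg.2 hlow), abs_of_nonneg (sub_nonneg.2 h1)]
    linarith
  · have hlow : t ≤ t ^ p := self_le_rpow_of_le_one ht h1 hp1
    have hup : t ^ p ≤ 1 := rpow_le_one ht h1 hp0
    rw [abs_of_nonpos (sub_nonpos.2 hup), abs_of_nonpos (sub_nonpos.2 h1)]
    linarith

lemma min_rpow_self_le_rpow {y p q : ℝ} (hy : 0 ≤ y) (hpq : p ≤ q) (hq1 : q ≤ 1) :
    min (y ^ p) y ≤ y ^ q := by
  rcases le_total y 1 with h1 | h1
  · exact (min_le_right _ _).trans (self_le_rpow_of_le_one hy h1 hq1)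
  · exact (min_le_left _ _).trans (rpow_le_rpow_of_exponent_le h1 hpq)

theorem stmt7_general (α : ℝ) (hα1 : 1 < α) (ε : ℝ) (hε0 : 0 ≤ ε)
    (hε : ε ≤ 2 - α) (x : ℝ) :
    |(|x + 1| ^ (α - 1) - 1)| ≤ min (|x| ^ ((α + ε) / 2)) (|x| ^ (α - 1)) := by
  have hp0 : 0 ≤ α - 1 := by linarith
  have hp1 : α - 1 ≤ 1 := by linarith
  have hdist : |(|x + 1| - 1)| ≤ |x| := by
    simpa using abs_abs_sub_abs_le_abs_sub (x + 1) 1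
  have hholder : |(|x + 1| ^ (α - 1) - 1)| ≤ |x| ^ (α - 1) := by
    simpa using (abs_rpow_sub_rpow_le_abs_sub_rpow (abs_nonneg (x + 1)) zero_le_one hp0 hp1).trans
      (rpow_le_rpow (abs_nonneg _) hdist hp0)
  have hlip : |(|x + 1| ^ (α - 1) - 1)| ≤ |x| :=
    (abs_rpow_sub_one_le_abs_sub_one (abs_nonneg _) hp0 hp1).trans hdist
  refine le_min ?_ hholder
  calc |(|x + 1| ^ (α - 1) - 1)| ≤ min (|x| ^ (α - 1)) |x| := le_min hholder hlip
    _ ≤ |x| ^ ((α + ε) / 2) := min_rpow_self_le_rpow (abs_nonneg x) (by linarith) (by linarith)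

theorem stmt7 (α : ℝ) (hα1 : 1 < α) (hα2 : α < 2) (ε : ℝ) (hε0 : 0 ≤ ε)
    (hε : ε ≤ 2 - α) (x : ℝ) :
    |(|x + 1| ^ (α - 1) - 1)| ≤ min (|x| ^ ((α + ε) / 2)) (|x| ^ (α - 1)) :=
  stmt7_general α hα1 ε hε0 hε x
end

section
/- For every α ∈ (1,2), every ε with 0 ≤ ε ≤ 2−α, and every real x, one has ||x+1|^{α-1} sgn(x+1) − 1| ≤ 3·min(|x|^{(α+ε)/2}, |x|^{α-1}). -/
/-!
Put `β = α - 1` and `γ = (α + ε) / 2`; the hypotheses give `0 ≤ β ≤ γ ≤ 1`. For `|x| < 1` we have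
`x + 1 > 0`, and `t ↦ t ^ β` moves `1 + x` no further from `1` than `x`, so the left side is at most
`|x| ≤ |x| ^ γ ≤ |x| ^ β`. For `|x| ≥ 1`, subadditivity of `t ↦ t ^ β` bounds the left side by
`|x| ^ β + 2 ≤ 3 |x| ^ β`, and here the minimum is `|x| ^ β`.
-/

/-- The left-continuous sign function: `1` for `x > 0` and `-1` for `x ≤ 0`. -/
noncomputable def sgn (x : ℝ) : ℝ := if 0 < x then 1 else -1

theorem abs_sgn (x : ℝ) : |sgn x| = 1 := by
  unfold sgn
  split <;> simp

theorem Real.abs_rpow_sub_one_le_abs_sub_one {y β : ℝ} (hy : 0 < y) (hβ0 : 0 ≤ β) (hβ1 : β ≤ 1) :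
    |y ^ β - 1| ≤ |y - 1| := by
  rcases le_total 1 y with h | h
  · have hle : y ^ β ≤ y := rpow_le_self_of_one_le h hβ1
    have hge : 1 ≤ y ^ β := one_le_rpow h hβ0
    rw [abs_of_nonneg (by linarith), abs_of_nonneg (by linarith)]
    linarith
  · have hge : y ≤ y ^ β := self_le_rpow_of_le_one hy.le h hβ1
    have hle : y ^ β ≤ 1 := rpow_le_one hy.le h hβ0
    rw [abs_of_nonpos (by linarith), abs_of_nonpos (by linarith)]
    linarith

section

open Real

variable {β : ℝ}

theorem abs_rpow_mul_sgn_add_one_sub_one_le_abs {x : ℝ} (hβ0 : 0 ≤ β) (hβ1 : β ≤ 1)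
    (hx : |x| < 1) : |(|x + 1| ^ β * sgn (x + 1) - 1)| ≤ |x| := by
  have hpos : 0 < x + 1 := by linarith [neg_abs_le x]
  rw [sgn, if_pos hpos, mul_one, abs_of_pos hpos]
  simpa using abs_rpow_sub_one_le_abs_sub_one hpos hβ0 hβ1

theorem abs_rpow_mul_sgn_add_one_sub_one_le_three_mul {x : ℝ} (hβ0 : 0 ≤ β) (hβ1 : β ≤ 1)
    (hx : 1 ≤ |x|) : |(|x + 1| ^ β * sgn (x + 1) - 1)| ≤ 3 * |x| ^ β := by
  have hsub : |x + 1| ^ β ≤ |x| ^ β + 1 :=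
    calc |x + 1| ^ β ≤ (|x| + 1) ^ β := by
          gcongr
          simpa using abs_add_le x 1
      _ ≤ |x| ^ β + 1 ^ β := rpow_add_le_add_rpow (abs_nonneg x) zero_le_one hβ0 hβ1
      _ = |x| ^ β + 1 := by rw [one_rpow]
  have hone : 1 ≤ |x| ^ β := one_le_rpow hx hβ0
  calc |(|x + 1| ^ β * sgn (x + 1) - 1)| ≤ |(|x + 1| ^ β * sgn (x + 1))| + |(1 : ℝ)| :=
        abs_sub _ _
    _ = |x + 1| ^ β + 1 := by
        rw [abs_mul, abs_sgn, mul_one, abs_one, abs_of_nonneg (by positivity)]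
    _ ≤ 3 * |x| ^ β := by linarith

end

theorem stmt8_general (α : ℝ) (hα1 : 1 < α) (ε : ℝ) (hε0 : 0 ≤ ε)
    (hε : ε ≤ 2 - α) (x : ℝ) :
    |(|x + 1| ^ (α - 1) * sgn (x + 1) - 1)| ≤ 3 * min (|x| ^ ((α + ε) / 2)) (|x| ^ (α - 1)) := by
  have hβ0 : 0 ≤ α - 1 := by linarith
  have hβ1 : α - 1 ≤ 1 := by linarith
  have hβγ : α - 1 ≤ (α + ε) / 2 := by linarith
  have hγ1 : (α + ε) / 2 ≤ 1 := by linarith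
  rcases lt_or_ge |x| 1 with hx | hx
  · have hlhs := abs_rpow_mul_sgn_add_one_sub_one_le_abs hβ0 hβ1 hx
    have hγ : |x| ≤ |x| ^ ((α + ε) / 2) := Real.self_le_rpow_of_le_one (abs_nonneg x) hx.le hγ1
    have hβ : |x| ≤ |x| ^ (α - 1) := Real.self_le_rpow_of_le_one (abs_nonneg x) hx.le hβ1
    have hmin := le_min hγ hβ
    linarith [abs_nonneg x]
  · rw [min_eq_right (Real.rpow_le_rpow_of_exponent_le hx hβγ)]
    exact abs_rpow_mul_sgn_add_one_sub_one_le_three_mul hβ0 hβ1 hx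

theorem stmt8 (α : ℝ) (hα1 : 1 < α) (hα2 : α < 2) (ε : ℝ) (hε0 : 0 ≤ ε)
    (hε : ε ≤ 2 - α) (x : ℝ) :
    |(|x + 1| ^ (α - 1) * sgn (x + 1) - 1)| ≤ 3 * min (|x| ^ ((α + ε) / 2)) (|x| ^ (α - 1)) :=
  stmt8_general α hα1 ε hε0 hε x
end
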